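/- Let Ω̂ be a symmetric positive semidefinite real p×p matrix, F a real p×n matrix, A a real p×p matrix, and suppose R₁ (n×n), R₂ (n×p), R₃ (p×p) are real matrices satisfying R₁ᵀ R₁ = I_n + Fᵀ Ω̂ F, R₁ᵀ R₂ = Fᵀ Ω̂ A, and R₂ᵀ R₂ + R₃ᵀ R₃ = Aᵀ Ω̂ A. Set M := Fᵀ Ω̂ F + I_n. Then R₁ is invertible, R₂ᵀ (R₁ᵀ)⁻¹ = Aᵀ Ω̂ F M⁻¹, and R₃ᵀ R₃ = Aᵀ Ω̂ A − Aᵀ Ω̂ F M⁻¹ Fᵀ Ω̂ A = Aᵀ (I_p − Ω̂ F M⁻¹ Fᵀ) Ω̂ A; moreover for every ε ∈ ℝ^p, (Aᵀ − R₂ᵀ (R₁ᵀ)⁻¹ Fᵀ) ε = Aᵀ (I_p − Ω̂ F M⁻¹ Fᵀ) ε. -/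

import Mathlib

/-!
`R₁ᵀ R₁ = M` is positive definite because `Ω̂` is positive semidefinite, so `R₁` is invertible and
`R₂ = R₁⁻ᵀ Fᵀ Ω̂ A`. Hence `R₂ᵀ R₁⁻ᵀ = Aᵀ Ω̂ F (R₁ᵀ R₁)⁻¹ = Aᵀ Ω̂ F M⁻¹` and
`R₂ᵀ R₂ = Aᵀ Ω̂ F M⁻¹ Fᵀ Ω̂ A`, which the third Gram identity turns into the Schur complement
formula for `R₃ᵀ R₃`; the remaining claims are rearrangements.
-/

open Matrix

namespace Matrix

variable {m n R : Type*} [Fintype n] [DecidableEq n] [CommRing R]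

theorem isUnit_of_isUnit_transpose_mul_self {R₁ : Matrix n n R} (h : IsUnit (R₁ᵀ * R₁)) :
    IsUnit R₁ := by
  rw [isUnit_iff_isUnit_det, det_mul, det_transpose] at h
  exact (isUnit_iff_isUnit_det R₁).2 (isUnit_of_mul_isUnit_left h)

variable {R₁ : Matrix n n R} {R₂ B : Matrix n m R}

theorem transpose_mul_inv_transpose_eq_of_transpose_mul_eq (hR₁ : IsUnit R₁)
    (h : R₁ᵀ * R₂ = B) : R₂ᵀ * (R₁ᵀ)⁻¹ = Bᵀ * (R₁ᵀ * R₁)⁻¹ := by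
  have hR₁t : IsUnit R₁ᵀ.det := by rwa [det_transpose, ← isUnit_iff_isUnit_det]
  have hR₂ : R₂ = (R₁ᵀ)⁻¹ * B := by
    rw [← h, ← Matrix.mul_assoc, nonsing_inv_mul _ hR₁t, Matrix.one_mul]
  rw [hR₂, transpose_mul, transpose_nonsing_inv, transpose_transpose, Matrix.mul_assoc,
    mul_inv_rev]

theorem transpose_mul_self_eq_of_transpose_mul_eq (hR₁ : IsUnit R₁) (h : R₁ᵀ * R₂ = B) :
    R₂ᵀ * R₂ = Bᵀ * (R₁ᵀ * R₁)⁻¹ * B := by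
  have hR₁t : IsUnit R₁ᵀ.det := by rwa [det_transpose, ← isUnit_iff_isUnit_det]
  calc R₂ᵀ * R₂ = R₂ᵀ * (R₁ᵀ)⁻¹ * (R₁ᵀ * R₂) := by
        rw [Matrix.mul_assoc, ← Matrix.mul_assoc (R₁ᵀ)⁻¹, nonsing_inv_mul _ hR₁t, Matrix.one_mul]
    _ = Bᵀ * (R₁ᵀ * R₁)⁻¹ * B := by
        rw [transpose_mul_inv_transpose_eq_of_transpose_mul_eq hR₁ h, h]

end Matrix

theorem sqrt_backward_prediction_identify
    (p n : ℕ) (Ωhat : Matrix (Fin p) (Fin p) ℝ) (hΩ : Ωhat.PosSemidef)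
    (F : Matrix (Fin p) (Fin n) ℝ) (A : Matrix (Fin p) (Fin p) ℝ)
    (R₁ : Matrix (Fin n) (Fin n) ℝ) (R₂ : Matrix (Fin n) (Fin p) ℝ)
    (R₃ : Matrix (Fin p) (Fin p) ℝ)
    (h₁ : R₁ᵀ * R₁ = 1 + Fᵀ * Ωhat * F)
    (h₂ : R₁ᵀ * R₂ = Fᵀ * Ωhat * A)
    (h₃ : R₂ᵀ * R₂ + R₃ᵀ * R₃ = Aᵀ * Ωhat * A) :
    let M : Matrix (Fin n) (Fin n) ℝ := Fᵀ * Ωhat * F + 1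
    IsUnit R₁ ∧
    R₂ᵀ * (R₁ᵀ)⁻¹ = Aᵀ * Ωhat * F * M⁻¹ ∧
    R₃ᵀ * R₃ = Aᵀ * Ωhat * A - Aᵀ * Ωhat * F * M⁻¹ * Fᵀ * Ωhat * A ∧
    Aᵀ * Ωhat * A - Aᵀ * Ωhat * F * M⁻¹ * Fᵀ * Ωhat * A
      = Aᵀ * (1 - Ωhat * F * M⁻¹ * Fᵀ) * Ωhat * A ∧
    ∀ ε : Fin p → ℝ,
      (Aᵀ - R₂ᵀ * (R₁ᵀ)⁻¹ * Fᵀ).mulVec ε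
        = Aᵀ.mulVec ((1 - Ωhat * F * M⁻¹ * Fᵀ).mulVec ε) := by
  intro M
  have hM : R₁ᵀ * R₁ = M := h₁.trans (add_comm _ _)
  have hMpd : M.PosDef := by
    simpa using PosDef.posSemidef_add (hΩ.conjTranspose_mul_mul_same F) PosDef.one
  have hR₁ : IsUnit R₁ := isUnit_of_isUnit_transpose_mul_self (hM ▸ hMpd.isUnit)
  have hBt : (Fᵀ * Ωhat * A)ᵀ = Aᵀ * Ωhat * F := by
    have hΩsymm : Ωhatᵀ = Ωhat := by simpa using hΩ.isHermitian.eq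
    simp only [transpose_mul, transpose_transpose, hΩsymm, Matrix.mul_assoc]
  have hgain : R₂ᵀ * (R₁ᵀ)⁻¹ = Aᵀ * Ωhat * F * M⁻¹ := by
    rw [transpose_mul_inv_transpose_eq_of_transpose_mul_eq hR₁ h₂, hBt, hM]
  have hR₂ : R₂ᵀ * R₂ = Aᵀ * Ωhat * F * M⁻¹ * Fᵀ * Ωhat * A := by
    rw [transpose_mul_self_eq_of_transpose_mul_eq hR₁ h₂, hBt, hM]
    simp only [Matrix.mul_assoc]
  refine ⟨hR₁, hgain, by rw [← h₃, hR₂]; abel,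
    by simp only [Matrix.mul_sub, Matrix.sub_mul, Matrix.mul_one, Matrix.mul_assoc], fun ε => ?_⟩
  rw [hgain, mulVec_mulVec]
  simp only [Matrix.mul_sub, Matrix.mul_one, Matrix.mul_assoc]
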